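/- Let d ≥ 1 be an integer and let G : [0,∞) → ℝ satisfy the q-th order radial moment condition for q ∈ {2, 4}, with ∫₀^∞ x^{d−1+i}|G(x)| dx < ∞ for 0 ≤ i ≤ q. (i) If q = 2 and G changes its sign 0 times on [0,∞) (i.e., G is of one weak sign and not identically zero), then G ≥ 0 on [0,∞) and B_{d,2}(G) > 0. (ii) If q = 4 and G changes its sign exactly once on [0,∞), at a point ρ > 0 (G is of one weak sign on [0,ρ] and of the opposite weak sign on [ρ,∞)), then G ≥ 0 on [0,ρ], G ≤ 0 on [ρ,∞), and B_{d,4}(G) < 0. In both cases the sign of B_{d,q}(G) equals (−1)^{q/2+1}. -/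

import Mathlib

open MeasureTheory Set Filter Topology

/-- Radial moment `B_{d,i}(G) = ∫₀^∞ x^{d−1+i} G(x) dx`. -/
noncomputable def Bmom (d i : ℕ) (G : ℝ → ℝ) : ℝ :=
  ∫ x in Ioi (0 : ℝ), x ^ (d - 1 + i) * G x

/-- `V_{d,1}(G) = ∫₀^∞ x^{d−1} (G′(x))² dx`. -/
noncomputable def V1 (d : ℕ) (G : ℝ → ℝ) : ℝ :=
  ∫ x in Ioi (0 : ℝ), x ^ (d - 1) * (deriv G x) ^ 2

/-- `b_d = 2 π^{d/2} / Γ(d/2)`. -/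
noncomputable def bconst (d : ℕ) : ℝ :=
  2 * Real.pi ^ ((d : ℝ) / 2) / Real.Gamma ((d : ℝ) / 2)

/-- The `q`-th order radial moment condition, with all integrals converging absolutely:
`B_{d,0}(G) = 1/b_d`, `B_{d,i}(G) = 0` for even `2 ≤ i ≤ q−2`, and `B_{d,q}(G) ≠ 0`. -/
def MomentCond (d q : ℕ) (G : ℝ → ℝ) : Prop :=
  (∀ i, Even i → i ≤ q → IntegrableOn (fun x => x ^ (d - 1 + i) * G x) (Ioi 0)) ∧
  Bmom d 0 G = (bconst d)⁻¹ ∧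
  (∀ i, Even i → 2 ≤ i → i ≤ q - 2 → Bmom d i G = 0) ∧
  Bmom d q G ≠ 0

/-- `g` changes its sign (exactly) `k` times on `[0,∞)`: there are points
`0 = x₀ < x₁ < ⋯ < x_{k+1} = ∞` such that on each `[x_{j−1}, x_j]` the function has a
constant weak sign `s_j ∈ {±1}`, is not identically zero there, and consecutive signs
alternate. -/
def ChangesSign (g : ℝ → ℝ) (k : ℕ) : Prop :=
  ∃ (t : Fin (k + 2) → EReal) (s : Fin (k + 1) → ℝ),
    StrictMono t ∧ t 0 = 0 ∧ t (Fin.last (k + 1)) = ⊤ ∧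
    (∀ j, s j = 1 ∨ s j = -1) ∧
    (∀ j : Fin k, s j.succ = - s j.castSucc) ∧
    ∀ j : Fin (k + 1),
      (∀ x : ℝ, t j.castSucc ≤ (x : EReal) → (x : EReal) ≤ t j.succ → 0 ≤ s j * g x) ∧
      (∃ x : ℝ, t j.castSucc ≤ (x : EReal) ∧ (x : EReal) ≤ t j.succ ∧ 0 < s j * g x)

/-- Coefficients of the optimal kernel `G^B_{d,q}`. -/
noncomputable def cB (d q i : ℕ) : ℝ :=
  (-1 : ℝ) ^ (i / 2) * Real.Gamma (((d : ℝ) + q + 4) / 2) * Real.Gamma (((d : ℝ) + q + i) / 2) /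
    (Real.pi ^ ((d : ℝ) / 2) * Real.Gamma ((q : ℝ) / 2) * Real.Gamma ((2 + (i : ℝ)) / 2) *
      Real.Gamma (((d : ℝ) + 2 + i) / 2) * Real.Gamma (((q : ℝ) + 4 - i) / 2))

/-- The optimal radial kernel `G^B_{d,q}(x) = (∑_{i ∈ {0,2,…,q+2}} c_{d,q,i} x^i)·𝟙[x ≤ 1]`. -/
noncomputable def GB (d q : ℕ) : ℝ → ℝ := fun x =>
  if x ≤ 1 then ∑ i ∈ Finset.range (q / 2 + 2), cB d q (2 * i) * x ^ (2 * i) else 0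

/-! A kernel that is nonnegative up to `ρ` and nonpositive beyond has
`∫₀^∞ x^{d−1+i} (x² − ρ²) G(x) dx ≤ 0`, i.e. `B_{d,i+2}(G) ≤ ρ² B_{d,i}(G)`. For `q = 4` the moment
condition `B_{d,2}(G) = 0` forces the sign pattern (the reversed one would give
`0 ≤ −ρ² B_{d,0}(G) < 0`) and then yields `B_{d,4}(G) ≤ 0`. For `q = 2` a nonpositive kernel would
have `B_{d,0}(G) ≤ 0`, against `B_{d,0}(G) = 1/b_d > 0`. -/

theorem bconst_pos {d : ℕ} (hd : 0 < d) : 0 < bconst d := by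
  have : 0 < Real.Gamma ((d : ℝ) / 2) := Real.Gamma_pos_of_pos (by positivity)
  unfold bconst
  positivity

theorem Bmom_neg (d i : ℕ) (G : ℝ → ℝ) : Bmom d i (-G) = -Bmom d i G := by
  simp only [Bmom, Pi.neg_apply, mul_neg, integral_neg]

theorem Bmom_nonneg (d i : ℕ) {G : ℝ → ℝ} (hG : ∀ x ∈ Ioi (0 : ℝ), 0 ≤ G x) :
    0 ≤ Bmom d i G :=
  setIntegral_nonneg measurableSet_Ioi fun x hx =>
    mul_nonneg (pow_nonneg (le_of_lt hx) _) (hG x hx)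

theorem Bmom_add_two_sub_mul_Bmom {d i : ℕ} {G : ℝ → ℝ} (ρ : ℝ)
    (hi : IntegrableOn (fun x => x ^ (d - 1 + i) * G x) (Ioi 0))
    (hi₂ : IntegrableOn (fun x => x ^ (d - 1 + (i + 2)) * G x) (Ioi 0)) :
    Bmom d (i + 2) G - ρ ^ 2 * Bmom d i G =
      ∫ x in Ioi (0 : ℝ), x ^ (d - 1 + i) * (x ^ 2 - ρ ^ 2) * G x := by
  rw [Bmom, Bmom, ← integral_const_mul, ← integral_sub hi₂ (hi.const_mul _)]
  congr 1 with x
  ring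

theorem Bmom_add_two_le_of_nonneg_of_nonpos {d i : ℕ} {G : ℝ → ℝ} {ρ : ℝ} (hρ : 0 ≤ ρ)
    (hi : IntegrableOn (fun x => x ^ (d - 1 + i) * G x) (Ioi 0))
    (hi₂ : IntegrableOn (fun x => x ^ (d - 1 + (i + 2)) * G x) (Ioi 0))
    (hpos : ∀ x ∈ Icc 0 ρ, 0 ≤ G x) (hneg : ∀ x ∈ Ici ρ, G x ≤ 0) :
    Bmom d (i + 2) G ≤ ρ ^ 2 * Bmom d i G := by
  have hfactor : ∀ x : ℝ, 0 < x → (x ^ 2 - ρ ^ 2) * G x ≤ 0 := fun x hx => by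
    rcases le_total x ρ with hxρ | hρx
    · exact mul_nonpos_of_nonpos_of_nonneg (by nlinarith) (hpos x ⟨hx.le, hxρ⟩)
    · exact mul_nonpos_of_nonneg_of_nonpos (by nlinarith) (hneg x hρx)
  have : ∫ x in Ioi (0 : ℝ), x ^ (d - 1 + i) * (x ^ 2 - ρ ^ 2) * G x ≤ 0 :=
    setIntegral_nonpos measurableSet_Ioi fun x hx => by
      rw [mul_assoc]
      exact mul_nonpos_of_nonneg_of_nonpos (pow_nonneg (le_of_lt hx) _) (hfactor x hx)
  linarith [Bmom_add_two_sub_mul_Bmom ρ hi hi₂]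

theorem ChangesSign.nonneg_or_nonpos_of_zero {g : ℝ → ℝ} (h : ChangesSign g 0) :
    (∀ x : ℝ, 0 ≤ x → 0 ≤ g x) ∨ ∀ x : ℝ, 0 ≤ x → g x ≤ 0 := by
  obtain ⟨t, s, -, ht0, ht1, hs, -, hsign⟩ := h
  have hsg : ∀ x : ℝ, 0 ≤ x → 0 ≤ s 0 * g x := fun x hx =>
    (hsign 0).1 x (by simpa [ht0] using hx)
      (by rw [show (0 : Fin 1).succ = Fin.last 1 from rfl, ht1]; exact le_top)
  rcases hs 0 with h1 | h1
  · exact Or.inl fun x hx => by simpa [h1] using hsg x hx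
  · exact Or.inr fun x hx => by simpa [h1] using hsg x hx

theorem nonneg_nonpos_or_nonpos_nonneg_of_mul_nonpos {α : Type*} {f : α → ℝ} {A B : Set α}
    (hA : ∃ a ∈ A, f a ≠ 0) (hB : ∃ b ∈ B, f b ≠ 0) (hAB : ∀ x ∈ A, ∀ y ∈ B, f x * f y ≤ 0) :
    ((∀ x ∈ A, 0 ≤ f x) ∧ ∀ y ∈ B, f y ≤ 0) ∨ ((∀ x ∈ A, f x ≤ 0) ∧ ∀ y ∈ B, 0 ≤ f y) := by
  obtain ⟨a, ha, hfa⟩ := hA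
  obtain ⟨b, hb, hfb⟩ := hB
  rcases hfa.lt_or_gt with hfa | hfa
  · have hfB : ∀ y ∈ B, 0 ≤ f y := fun y hy => nonneg_of_mul_nonpos_right (hAB a ha y hy) hfa
    have hfb : 0 < f b := (hfB b hb).lt_of_ne' hfb
    exact Or.inr ⟨fun x hx => nonpos_of_mul_nonpos_left (hAB x hx b hb) hfb, hfB⟩
  · have hfB : ∀ y ∈ B, f y ≤ 0 := fun y hy => nonpos_of_mul_nonpos_right (hAB a ha y hy) hfa
    have hfb : f b < 0 := (hfB b hb).lt_of_ne hfb
    exact Or.inl ⟨fun x hx => nonneg_of_mul_nonpos_left (hAB x hx b hb) hfb, hfB⟩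

/-- Sign structure of minimum-sign-change kernels of order `q ∈ {2,4}`.
(i) A 2nd-order kernel of constant weak sign (not identically zero) is nonnegative and has
`B_{d,2}(G) > 0`. (ii) A 4th-order kernel changing its sign exactly once, at `ρ > 0`, is
nonnegative on `[0,ρ]`, nonpositive on `[ρ,∞)`, and has `B_{d,4}(G) < 0`.
In both cases the sign of `B_{d,q}(G)` is `(−1)^{q/2+1}`. -/
theorem sign_structure_min_sign_change_kernels (d : ℕ) (hd : 1 ≤ d) :
    (∀ G : ℝ → ℝ,
      (∀ i ≤ 2, IntegrableOn (fun x => x ^ (d - 1 + i) * |G x|) (Ioi 0)) →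
      MomentCond d 2 G →
      ChangesSign G 0 →
      (∀ x : ℝ, 0 ≤ x → 0 ≤ G x) ∧ 0 < Bmom d 2 G) ∧
    (∀ G : ℝ → ℝ,
      (∀ i ≤ 4, IntegrableOn (fun x => x ^ (d - 1 + i) * |G x|) (Ioi 0)) →
      MomentCond d 4 G →
      ∀ ρ : ℝ, 0 < ρ →
        ((∀ x ∈ Icc (0 : ℝ) ρ, 0 ≤ G x) ∨ (∀ x ∈ Icc (0 : ℝ) ρ, G x ≤ 0)) →
        ((∀ x ∈ Ici ρ, 0 ≤ G x) ∨ (∀ x ∈ Ici ρ, G x ≤ 0)) →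
        (∃ x ∈ Icc (0 : ℝ) ρ, G x ≠ 0) →
        (∃ x ∈ Ici ρ, G x ≠ 0) →
        (∀ x ∈ Icc (0 : ℝ) ρ, ∀ y ∈ Ici ρ, G x * G y ≤ 0) →
        (∀ x ∈ Icc (0 : ℝ) ρ, 0 ≤ G x) ∧ (∀ x ∈ Ici ρ, G x ≤ 0) ∧ Bmom d 4 G < 0) := by
  have hB₀ : 0 < (bconst d)⁻¹ := inv_pos.2 (bconst_pos hd)
  constructor
  · rintro G - ⟨-, h₀, -, h₂⟩ hS
    rcases hS.nonneg_or_nonpos_of_zero with hG | hG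
    · exact ⟨hG, (Bmom_nonneg d 2 fun x hx => hG x (le_of_lt hx)).lt_of_ne' h₂⟩
    · have := Bmom_nonneg d 0 (G := -G) fun x hx => neg_nonneg.2 (hG x (le_of_lt hx))
      rw [Bmom_neg, h₀] at this
      linarith
  · rintro G - ⟨hI, h₀, hvanish, h₄⟩ ρ hρ - - hnz₁ hnz₂ hcross
    have h₂ : Bmom d 2 G = 0 := hvanish 2 even_two le_rfl (by norm_num)
    have hI₀ := hI 0 Even.zero (by norm_num)
    have hI₂ := hI 2 even_two (by norm_num)
    have hI₄ := hI 4 (by decide) le_rfl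
    rcases nonneg_nonpos_or_nonpos_nonneg_of_mul_nonpos hnz₁ hnz₂ hcross with
      ⟨hpos, hneg⟩ | ⟨hneg, hpos⟩
    · have := Bmom_add_two_le_of_nonneg_of_nonpos (i := 2) hρ.le hI₂ hI₄ hpos hneg
      exact ⟨hpos, hneg, lt_of_le_of_ne (by simpa [h₂] using this) h₄⟩
    · have := Bmom_add_two_le_of_nonneg_of_nonpos (i := 0) (G := -G) hρ.le
        (by simpa [mul_neg] using hI₀.neg) (by simpa [mul_neg] using hI₂.neg)
        (fun x hx => neg_nonneg.2 (hneg x hx)) fun x hx => neg_nonpos.2 (hpos x hx)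
      rw [Bmom_neg, Bmom_neg, h₂, h₀] at this
      nlinarith [pow_pos hρ 2]
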